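/- arXiv:1112.3952 — 5 statements merged into one kernel-verified Lean document; each statement's English description precedes it below -/
import Mathlib

section
/- Let G be a group, A, B ∈ G, and suppose A B^p A^(-1) = B^q, that B has finite order ℓ, and that conjugation by A restricted to ⟨B⟩ has order r as an automorphism (i.e., A^r B A^(-r) = B). Then B^(p^r - q^r) = 1, i.e., ℓ divides p^r - q^r. -/
theorem stmt3 {G : Type*} [Group G] (p q : ℤ) (A B : G) (ℓ r : ℕ)
    (hrel : A * B ^ p * A⁻¹ = B ^ q)
    (hℓ : orderOf B = ℓ) (hℓpos : 0 < ℓ)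
    (hr : 0 < r) (hAr : A ^ r * B * A⁻¹ ^ r = B) :
    B ^ (p ^ r - q ^ r) = 1 ∧ (ℓ : ℤ) ∣ p ^ r - q ^ r := by
  have conj : ∀ (a b : G) (n : ℤ), a * b ^ n * a⁻¹ = (a * b * a⁻¹) ^ n := by
    intro a b n
    simpa [MulAut.conj_apply] using (map_zpow (MulAut.conj a) b n).symm
  have key : ∀ k : ℕ, A ^ k * B ^ (p ^ k) * (A ^ k)⁻¹ = B ^ (q ^ k) := by
    intro k
    induction k with
    | zero => simp
    | succ k ih =>
      have h1 : B ^ (p ^ (k+1)) = (B ^ p) ^ (p ^ k : ℤ) := by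
        rw [← zpow_mul, ← pow_succ']
      calc A ^ (k+1) * B ^ (p ^ (k+1)) * (A ^ (k+1))⁻¹
          = A ^ k * (A * (B ^ p) ^ (p ^ k : ℤ) * A⁻¹) * (A ^ k)⁻¹ := by
            rw [h1, pow_succ]; group
        _ = A ^ k * ((A * B ^ p * A⁻¹) ^ (p ^ k : ℤ)) * (A ^ k)⁻¹ := by
            rw [← conj]
        _ = A ^ k * (B ^ q) ^ (p ^ k : ℤ) * (A ^ k)⁻¹ := by rw [hrel]
        _ = (A ^ k * B ^ (p ^ k) * (A ^ k)⁻¹) ^ (q : ℤ) := by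
            rw [← conj]
            congr 1
            rw [← zpow_mul, ← zpow_mul, mul_comm]
        _ = B ^ (q ^ (k+1)) := by rw [ih, ← zpow_mul, ← pow_succ]
  have hfix : A ^ r * B ^ (p ^ r) * (A ^ r)⁻¹ = B ^ (p ^ r) := by
    rw [conj]
    rw [show A ^ r * B * (A ^ r)⁻¹ = B by rw [← inv_pow]; exact hAr]
  have heq : B ^ (p ^ r) = B ^ (q ^ r) := by rw [← key r, hfix]
  have h1 : B ^ (p ^ r - q ^ r) = 1 := by
    rw [zpow_sub, heq, mul_inv_cancel]
  refine ⟨h1, ?_⟩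
  rw [← hℓ]
  exact orderOf_dvd_iff_zpow_eq_one.mpr h1
end

section
/- Let n ≥ 0, c a nonzero complex number, ℓ a positive integer, λ ∈ ℂ a primitive ℓ-th root of unity, and s an integer with gcd(q,ℓ)=1 and p ≡ q·s (mod ℓ). Define (n+1)×(n+1) matrices A = c·P, where P is the cyclic permutation matrix sending e_i to e_{i+1} (indices mod n+1), and B = diag(λ, λ^s, λ^(s^2), ..., λ^(s^n)). Then A B^p = B^q A if and only if ℓ divides q^(n+1) − p^(n+1). -/
/-!
Since `B` is diagonal and `P` a cyclic shift, `A B^p = B^q A` says entrywise that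
`λ^(s^j p) = λ^(s^(j+1) q)` for every `j` modulo `n + 1`, i.e. `s^j p ≡ s^(j+1) q (mod ℓ)`.
As `p ≡ q s`, these congruences hold automatically except at the wrap-around `j = n`, where
the condition reads `s^n p ≡ q`. Multiplying by the unit `q^n` and using `q s ≡ p` again turns
it into `p^(n+1) ≡ q^(n+1)`.
-/

/-- The cyclic permutation matrix on `Fin (n+1)` sending `e i` to `e (i+1)`. -/
def cycP (n : ℕ) : Matrix (Fin (n + 1)) (Fin (n + 1)) ℂ :=
  Matrix.of fun i j => if i = j + 1 then 1 else 0

theorem Matrix.diagonal_zpow {ι K : Type*} [Fintype ι] [DecidableEq ι] [Field K]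
    (d : ι → K) (hd : ∀ i, d i ≠ 0) (k : ℤ) :
    diagonal d ^ k = diagonal fun i => d i ^ k := by
  cases k with
  | ofNat m => simp [diagonal_pow]
  | negSucc m =>
    rw [zpow_negSucc, diagonal_pow]
    refine inv_eq_left_inv ?_
    rw [diagonal_mul_diagonal, ← diagonal_one]
    congr 1
    funext i
    simp [zpow_negSucc, hd i]

theorem IsPrimitiveRoot.zpow_eq_zpow_iff_intCast_eq {G₀ : Type*} [CommGroupWithZero G₀]
    {ζ : G₀} {k : ℕ} (h : IsPrimitiveRoot ζ k) (hk : k ≠ 0) (a b : ℤ) :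
    ζ ^ a = ζ ^ b ↔ (a : ZMod k) = b := by
  have hζ : ζ ≠ 0 := h.ne_zero hk
  rw [ZMod.intCast_eq_intCast_iff_dvd_sub, ← h.zpow_eq_one_iff_dvd, zpow_sub₀ hζ,
    div_eq_one_iff_eq (zpow_ne_zero _ hζ), eq_comm]

theorem ZMod.isUnit_intCast_of_gcd_eq_one {q : ℤ} {ℓ : ℕ} (h : Int.gcd q ℓ = 1) :
    IsUnit (q : ZMod ℓ) := by
  have := (Int.isCoprime_iff_gcd_eq_one.mpr h).map (Int.castRingHom (ZMod ℓ))
  rwa [eq_intCast, map_natCast, ZMod.natCast_self, isCoprime_zero_right] at this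

theorem cycP_mul_diagonal_eq_diagonal_mul_cycP_iff {n : ℕ} (d e : Fin (n + 1) → ℂ) :
    cycP n * Matrix.diagonal d = Matrix.diagonal e * cycP n ↔ ∀ j, d j = e (j + 1) := by
  simp only [← Matrix.ext_iff, Matrix.mul_diagonal, Matrix.diagonal_mul, cycP, Matrix.of_apply,
    ite_mul, mul_ite, one_mul, mul_one, zero_mul, mul_zero]
  constructor
  · intro h j
    simpa using h (j + 1) j
  · intro h i j
    split_ifs with hij
    · rw [hij, h j]
    · rfl

section CommMonoid

variable {M : Type*} [CommMonoid M] {p q s : M}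

theorem forall_fin_pow_mul_eq_pow_succ_mul_iff (hpqs : p = q * s) (n : ℕ) :
    (∀ j : Fin (n + 1), s ^ (j : ℕ) * p = s ^ ((j + 1 : Fin (n + 1)) : ℕ) * q) ↔
      s ^ n * p = q := by
  constructor
  · intro h
    simpa using h (Fin.last n)
  · intro h j
    rcases (Fin.le_last j).eq_or_lt with rfl | hj
    · simpa using h
    · rw [Fin.val_add_one_of_lt hj, hpqs, pow_succ]
      ac_rfl

theorem pow_mul_eq_iff_pow_succ_eq (hq : IsUnit q) (hpqs : p = q * s) (n : ℕ) :
    s ^ n * p = q ↔ p ^ (n + 1) = q ^ (n + 1) := by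
  have hp : p ^ (n + 1) = q ^ n * (s ^ n * p) := by
    rw [pow_succ, ← mul_assoc, ← mul_pow, ← hpqs]
  rw [hp, pow_succ, (hq.pow n).mul_right_inj]

end CommMonoid

theorem stmt10_general (n : ℕ) (p q s : ℤ)
    (c : ℂ) (hc : c ≠ 0) (ℓ : ℕ) (hℓ : 0 < ℓ) (lam : ℂ)
    (hlam : IsPrimitiveRoot lam ℓ) (hqℓ : Int.gcd q ℓ = 1)
    (hpqs : p ≡ q * s [ZMOD ℓ]) :
    (c • cycP n) * (Matrix.diagonal fun i : Fin (n + 1) => lam ^ (s ^ (i : ℕ))) ^ p =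
      (Matrix.diagonal fun i : Fin (n + 1) => lam ^ (s ^ (i : ℕ))) ^ q * (c • cycP n)
    ↔ (ℓ : ℤ) ∣ q ^ (n + 1) - p ^ (n + 1) := by
  have hlam0 : lam ≠ 0 := hlam.ne_zero hℓ.ne'
  have hpqs' : (p : ZMod ℓ) = q * s := by
    rw [(ZMod.intCast_eq_intCast_iff _ _ _).mpr hpqs, Int.cast_mul]
  rw [Matrix.diagonal_zpow _ (fun _ => zpow_ne_zero _ hlam0),
    Matrix.diagonal_zpow _ (fun _ => zpow_ne_zero _ hlam0), smul_mul_assoc, mul_smul_comm,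
    (smul_right_injective _ hc).eq_iff, cycP_mul_diagonal_eq_diagonal_mul_cycP_iff]
  simp only [← zpow_mul, hlam.zpow_eq_zpow_iff_intCast_eq hℓ.ne', Int.cast_mul, Int.cast_pow]
  rw [forall_fin_pow_mul_eq_pow_succ_mul_iff hpqs',
    pow_mul_eq_iff_pow_succ_eq (ZMod.isUnit_intCast_of_gcd_eq_one hqℓ) hpqs',
    ← ZMod.intCast_eq_intCast_iff_dvd_sub, Int.cast_pow, Int.cast_pow]

theorem stmt10 (n : ℕ) (p q s : ℤ) (hp : p ≠ 0) (hq : q ≠ 0) (hpq : IsCoprime p q)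
    (c : ℂ) (hc : c ≠ 0) (ℓ : ℕ) (hℓ : 0 < ℓ) (lam : ℂ)
    (hlam : IsPrimitiveRoot lam ℓ) (hqℓ : Int.gcd q ℓ = 1)
    (hpqs : p ≡ q * s [ZMOD ℓ]) :
    (c • cycP n) * (Matrix.diagonal fun i : Fin (n + 1) => lam ^ (s ^ (i : ℕ))) ^ p =
      (Matrix.diagonal fun i : Fin (n + 1) => lam ^ (s ^ (i : ℕ))) ^ q * (c • cycP n)
    ↔ (ℓ : ℤ) ∣ q ^ (n + 1) - p ^ (n + 1) :=
  stmt10_general n p q s c hc ℓ hℓ lam hlam hqℓ hpqs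
end

section
/- Let A = c·P (c ∈ ℂ nonzero, P the (n+1)-cycle permutation matrix) and B a diagonal matrix with pairwise distinct diagonal entries. Then any subspace W of ℂ^(n+1) invariant under both A and B is either 0 or all of ℂ^(n+1); i.e., the matrix group generated by A and B acts irreducibly on ℂ^(n+1). -/
open Polynomial

theorem Submodule.single_mem_of_smul_mem {K ι : Type*} [Field K] [Fintype ι] [DecidableEq ι]
    {d : ι → K} (hd : Function.Injective d) {W : Submodule K (ι → K)}
    (hW : ∀ x ∈ W, d • x ∈ W) {x : ι → K} (hx : x ∈ W) {i : ι} (hi : x i ≠ 0) :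
    Pi.single i 1 ∈ W := by
  set p := Lagrange.basis Finset.univ d i
  have hp : aeval d p • x = x i • Pi.single i 1 := by
    funext k
    rcases eq_or_ne k i with rfl | hk
    · simp [p, Lagrange.eval_basis_self hd.injOn (Finset.mem_univ _)]
    · simp [p, Lagrange.eval_basis_of_ne hk.symm (Finset.mem_univ _), hk]
  have hpx : x i • Pi.single i 1 ∈ W := hp ▸ aeval_apply_smul_mem_of_le_comap' hx p d hW
  simpa [smul_smul, inv_mul_cancel₀ hi] using W.smul_mem (x i)⁻¹ hpx

theorem Submodule.eq_top_of_forall_single_mem {K ι : Type*} [Field K] [Fintype ι]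
    [DecidableEq ι] {W : Submodule K (ι → K)} (h : ∀ i, Pi.single i 1 ∈ W) : W = ⊤ := by
  rw [eq_top_iff, ← (Pi.basisFun K ι).span_eq, Submodule.span_le]
  rintro _ ⟨i, rfl⟩
  simpa using h i

theorem Fin.forall_of_add_one_closed {n : ℕ} {P : Fin (n + 1) → Prop} {i : Fin (n + 1)}
    (hi : P i) (hP : ∀ k, P k → P (k + 1)) (j : Fin (n + 1)) : P j := by
  have : ∀ k : Fin (n + 1), P (i + k) := by
    refine Fin.induction (by simpa using hi) fun k hk => ?_
    simpa [← Fin.coeSucc_eq_succ, add_assoc] using hP _ hk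
  simpa using this (j - i)

theorem cycP_mulVec_single (n : ℕ) (i : Fin (n + 1)) :
    (cycP n).mulVec (Pi.single i 1) = Pi.single (i + 1) 1 := by
  funext j
  simp [cycP, Pi.single_apply]

theorem stmt12 (n : ℕ) (c : ℂ) (hc : c ≠ 0) (d : Fin (n + 1) → ℂ)
    (hd : Function.Injective d) (W : Submodule ℂ (Fin (n + 1) → ℂ))
    (hWA : ∀ x ∈ W, (c • cycP n).mulVec x ∈ W)
    (hWB : ∀ x ∈ W, (Matrix.diagonal d).mulVec x ∈ W) :
    W = ⊥ ∨ W = ⊤ := by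
  refine or_iff_not_imp_left.mpr fun hW => ?_
  obtain ⟨x, hxW, hx0⟩ := W.ne_bot_iff.mp hW
  obtain ⟨i, hi⟩ := Function.ne_iff.mp hx0
  have hdW : ∀ y ∈ W, d • y ∈ W := fun y hy => by
    rw [← show (Matrix.diagonal d).mulVec y = d • y from funext (Matrix.mulVec_diagonal d y)]
    exact hWB y hy
  have hstep : ∀ k, Pi.single k 1 ∈ W → Pi.single (k + 1) 1 ∈ W := fun k hk => by
    have := W.smul_mem c⁻¹ (hWA _ hk)
    rwa [Matrix.smul_mulVec, cycP_mulVec_single, smul_smul, inv_mul_cancel₀ hc, one_smul] at this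
  exact W.eq_top_of_forall_single_mem
    (Fin.forall_of_add_one_closed (W.single_mem_of_smul_mem hd hdW hxW hi) hstep)
end

section
/- Let V be a finite-dimensional complex vector space, A an invertible linear map on V, B a linear map, and suppose there are no nonzero proper subspaces of V invariant under both A and B. If v is a nonzero eigenvector of B and each A^m v is again an eigenvector of B, then {v, Av, A^2 v, ..., A^n v} (where n + 1 = dim V) is a basis of V. -/
/-!
The span of all the iterates `A ^ m v` is invariant under `A`, and under `B` because it is
spanned by eigenvectors of `B`; it contains `v ≠ 0`, so it is all of `V`. By Cayley–Hamilton,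
`A ^ k` is a polynomial in `A` of degree below `dim V`, so the first `dim V` iterates already
span `V`, and a spanning family of `dim V` vectors is a basis.
-/

open Polynomial Module Submodule

section Cyclic

variable {R M : Type*} [CommRing R] [AddCommGroup M] [Module R M]

theorem Module.End.pow_apply_mem_span_pow_apply_fin [Nontrivial R] [Module.Free R M]
    [Module.Finite R M] (f : Module.End R M) (v : M) {d : ℕ} (hd : finrank R M ≤ d) (k : ℕ) :
    (f ^ k) v ∈ span R (Set.range fun i : Fin d => (f ^ (i : ℕ)) v) := by
  have hq : (X ^ k %ₘ f.charpoly).degree < finrank R M := by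
    rw [← f.charpoly_natDegree, ← degree_eq_natDegree f.charpoly_monic.ne_zero]
    exact degree_modByMonic_lt _ f.charpoly_monic
  rw [f.pow_eq_aeval_mod_charpoly, aeval_endomorphism, sum_def]
  refine sum_mem fun i hi => smul_mem _ _ (subset_span ⟨⟨i, ?_⟩, rfl⟩)
  have hlt : (i : WithBot ℕ) < finrank R M :=
    (le_degree_of_ne_zero (Polynomial.mem_support_iff.mp hi)).trans_lt hq
  exact (WithBot.coe_lt_coe.mp hlt).trans_le hd

theorem Module.End.span_range_pow_apply_eq_span_fin [Nontrivial R] [Module.Free R M]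
    [Module.Finite R M] (f : Module.End R M) (v : M) {d : ℕ} (hd : finrank R M ≤ d) :
    span R (Set.range fun i : Fin d => (f ^ (i : ℕ)) v) =
      span R (Set.range fun m : ℕ => (f ^ m) v) :=
  le_antisymm (span_mono (Set.range_comp_subset_range Fin.val fun m : ℕ => (f ^ m) v))
    (span_le.mpr (Set.range_subset_iff.mpr (f.pow_apply_mem_span_pow_apply_fin v hd)))

theorem Module.End.span_range_pow_apply_le_comap (f : Module.End R M) (v : M) :
    span R (Set.range fun m : ℕ => (f ^ m) v) ≤
      (span R (Set.range fun m : ℕ => (f ^ m) v)).comap f := by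
  refine span_le.mpr (Set.range_subset_iff.mpr fun m => ?_)
  rw [SetLike.mem_coe, mem_comap, ← Module.End.mul_apply, ← pow_succ']
  exact subset_span ⟨m + 1, rfl⟩

theorem Module.End.span_le_comap_of_forall_eigenvector (g : Module.End R M) {s : Set M}
    (hs : ∀ x ∈ s, ∃ μ : R, g x = μ • x) : span R s ≤ (span R s).comap g := by
  refine span_le.mpr fun x hx => ?_
  obtain ⟨μ, hμ⟩ := hs x hx
  rw [SetLike.mem_coe, mem_comap, hμ]
  exact smul_mem _ _ (subset_span hx)

end Cyclic

theorem stmt13_general {V : Type*} [AddCommGroup V] [Module ℂ V] [FiniteDimensional ℂ V]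
    (n : ℕ) (hn : Module.finrank ℂ V = n + 1)
    (A B : Module.End ℂ V)
    (hsimple : ∀ W : Submodule ℂ V, (∀ x ∈ W, A x ∈ W) → (∀ x ∈ W, B x ∈ W) →
      W = ⊥ ∨ W = ⊤)
    (v : V) (hv : v ≠ 0)
    (heigs : ∀ m : ℕ, ∃ μ : ℂ, B ((A ^ m) v) = μ • ((A ^ m) v)) :
    LinearIndependent ℂ (fun i : Fin (n + 1) => (A ^ (i : ℕ)) v) ∧
      Submodule.span ℂ (Set.range fun i : Fin (n + 1) => (A ^ (i : ℕ)) v) = ⊤ := by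
  set K := span ℂ (Set.range fun m : ℕ => (A ^ m) v)
  have hK : K = ⊤ := by
    refine (hsimple K (A.span_range_pow_apply_le_comap v)
      (B.span_le_comap_of_forall_eigenvector ?_)).resolve_left fun hbot => hv ?_
    · rintro _ ⟨m, rfl⟩
      exact heigs m
    · have hvK : v ∈ K := subset_span ⟨0, by simp⟩
      rwa [hbot, mem_bot] at hvK
  have hspan := (A.span_range_pow_apply_eq_span_fin v hn.le).trans hK
  refine ⟨linearIndependent_of_top_le_span_of_card_eq_finrank hspan.ge ?_, hspan⟩
  rw [Fintype.card_fin, hn]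

theorem stmt13 {V : Type*} [AddCommGroup V] [Module ℂ V] [FiniteDimensional ℂ V]
    (n : ℕ) (hn : Module.finrank ℂ V = n + 1)
    (A B : Module.End ℂ V) (hA : Function.Bijective A)
    (hsimple : ∀ W : Submodule ℂ V, (∀ x ∈ W, A x ∈ W) → (∀ x ∈ W, B x ∈ W) →
      W = ⊥ ∨ W = ⊤)
    (v : V) (hv : v ≠ 0) (lam : ℂ) (heig : B v = lam • v)
    (heigs : ∀ m : ℕ, ∃ μ : ℂ, B ((A ^ m) v) = μ • ((A ^ m) v)) :
    LinearIndependent ℂ (fun i : Fin (n + 1) => (A ^ (i : ℕ)) v) ∧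
      Submodule.span ℂ (Set.range fun i : Fin (n + 1) => (A ^ (i : ℕ)) v) = ⊤ :=
  stmt13_general n hn A B hsimple v hv heigs
end

section
/- There exists a 3-dimensional irreducible complex representation of BS(2,5): explicitly, with ζ a primitive 9th root of unity and any c ≠ 0, the assignment a ↦ c·P (P the 3-cycle permutation matrix) and b ↦ diag(ζ, ζ^4, ζ^7) extends to a group homomorphism BS(2,5) → GL₃(ℂ) whose image has no nontrivial proper invariant subspace. -/
def BSrel (p q : ℤ) : Set (FreeGroup Bool) :=
  {FreeGroup.of true * (FreeGroup.of false) ^ p * (FreeGroup.of true)⁻¹ *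
    ((FreeGroup.of false) ^ q)⁻¹}

abbrev BS (p q : ℤ) := PresentedGroup (BSrel p q)

def BSa (p q : ℤ) : BS p q := PresentedGroup.of true
def BSb (p q : ℤ) : BS p q := PresentedGroup.of false

/-- The 3-cycle permutation matrix sending `e i` to `e (i+1)`. -/
def P3 : Matrix (Fin 3) (Fin 3) ℂ :=
  Matrix.of fun i j => if i = j + 1 then 1 else 0

theorem stmt18 (c : ℂ) (hc : c ≠ 0) (ζ : ℂ) (hζ9 : ζ ^ 9 = 1) (hζ3 : ζ ^ 3 ≠ 1) :
    ∃ ρ : BS 2 5 →* GL (Fin 3) ℂ,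
      ((ρ (BSa 2 5) : GL (Fin 3) ℂ) : Matrix (Fin 3) (Fin 3) ℂ) = c • P3 ∧
      ((ρ (BSb 2 5) : GL (Fin 3) ℂ) : Matrix (Fin 3) (Fin 3) ℂ) =
        Matrix.diagonal ![ζ, ζ ^ 4, ζ ^ 7] ∧
      ∀ W : Submodule ℂ (Fin 3 → ℂ),
        (∀ g : BS 2 5, ∀ x ∈ W,
          ((ρ g : GL (Fin 3) ℂ) : Matrix (Fin 3) (Fin 3) ℂ).mulVec x ∈ W) →
        W = ⊥ ∨ W = ⊤ := by
  have hζ0 : ζ ≠ 0 := by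
    intro h; rw [h] at hζ9; norm_num at hζ9
  set d : Fin 3 → ℂ := ![ζ, ζ ^ 4, ζ ^ 7] with hd
  set Dm : Matrix (Fin 3) (Fin 3) ℂ := Matrix.diagonal d with hDm
  have hPPT : P3 * (P3 * P3) = 1 := by
    ext i j; fin_cases i <;> fin_cases j <;>
      simp [P3, Matrix.mul_apply, Fin.sum_univ_three, Matrix.one_apply]
  have hPTP : (P3 * P3) * P3 = 1 := by
    ext i j; fin_cases i <;> fin_cases j <;>
      simp [P3, Matrix.mul_apply, Fin.sum_univ_three, Matrix.one_apply]
  set Pu : GL (Fin 3) ℂ := ⟨P3, P3 * P3, hPPT, hPTP⟩ with hPu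
  set Cu : GL (Fin 3) ℂ :=
    ⟨c • 1, c⁻¹ • 1,
      by rw [smul_mul_assoc, one_mul, smul_smul, mul_inv_cancel₀ hc, one_smul],
      by rw [smul_mul_assoc, one_mul, smul_smul, inv_mul_cancel₀ hc, one_smul]⟩ with hCu
  set A : GL (Fin 3) ℂ := Cu * Pu with hA
  have hAval : (A : Matrix (Fin 3) (Fin 3) ℂ) = c • P3 := by
    simp [hA, hCu, hPu, Units.val_mul, smul_mul_assoc]
  set D : GL (Fin 3) ℂ :=
    ⟨Dm, Matrix.diagonal ![ζ ^ 8, ζ ^ 5, ζ ^ 2], by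
      rw [hDm, Matrix.diagonal_mul_diagonal]
      ext i j; fin_cases i <;> fin_cases j <;>
        simp [Matrix.diagonal_apply, hd, Matrix.one_apply] <;> ring_nf <;>
        first | exact hζ9 | linear_combination hζ9, by
      rw [hDm, Matrix.diagonal_mul_diagonal]
      ext i j; fin_cases i <;> fin_cases j <;>
        simp [Matrix.diagonal_apply, hd, Matrix.one_apply] <;> ring_nf <;>
        first | exact hζ9 | linear_combination hζ9⟩ with hD
  have hred : ∀ a : ℕ, ζ ^ a = ζ ^ (a % 9) := by
    intro a
    conv_lhs => rw [← Nat.div_add_mod a 9]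
    rw [pow_add, pow_mul, hζ9, one_pow, one_mul]
  have key : P3 * Dm ^ 2 = Dm ^ 5 * P3 := by
    rw [hDm, Matrix.diagonal_pow, Matrix.diagonal_pow]
    ext i j; fin_cases i <;> fin_cases j <;>
      simp [P3, Matrix.mul_apply, Fin.sum_univ_three, Matrix.diagonal_apply, hd, ← pow_mul] <;>
      norm_num [hred 20, hred 35, hred 14]
  have keyU : A * D ^ (2:ℤ) = D ^ (5:ℤ) * A := by
    have h2 : D ^ (2:ℤ) = D ^ (2:ℕ) := zpow_ofNat D 2
    have h5 : D ^ (5:ℤ) = D ^ (5:ℕ) := zpow_ofNat D 5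
    rw [h2, h5]
    ext1
    simp only [Units.val_mul, Units.val_pow_eq_pow_val]
    show (c • 1) * P3 * Dm ^ 2 = Dm ^ 5 * ((c • 1) * P3)
    simp only [smul_mul_assoc, one_mul, mul_smul_comm, key]
  have hrel : ∀ r ∈ BSrel 2 5,
      (FreeGroup.lift (fun b : Bool => if b then A else D)) r = 1 := by
    intro r hr
    have hr' : r = FreeGroup.of true * (FreeGroup.of false) ^ (2:ℤ) * (FreeGroup.of true)⁻¹ *
        ((FreeGroup.of false) ^ (5:ℤ))⁻¹ := hr
    subst hr'
    simp only [_root_.map_mul, map_zpow, map_inv, FreeGroup.lift_apply_of, reduceIte]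
    show A * D ^ (2:ℤ) * A⁻¹ * ((D ^ (5:ℤ)))⁻¹ = 1
    rw [keyU]
    group
  refine ⟨PresentedGroup.toGroup hrel, ?_, ?_, ?_⟩
  · rw [show BSa 2 5 = PresentedGroup.of true from rfl, PresentedGroup.toGroup.of]
    exact hAval
  · rw [show BSb 2 5 = PresentedGroup.of false from rfl, PresentedGroup.toGroup.of]
    rfl
  · intro W hW
    by_cases hbot : W = ⊥
    · exact Or.inl hbot
    right
    have hDW : ∀ x ∈ W, Dm.mulVec x ∈ W := by
      intro x hx
      have h := hW (BSb 2 5) x hx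
      rwa [show (((PresentedGroup.toGroup hrel) (BSb 2 5) : GL (Fin 3) ℂ) :
          Matrix (Fin 3) (Fin 3) ℂ) = Dm from by
        rw [show BSb 2 5 = PresentedGroup.of false from rfl, PresentedGroup.toGroup.of]; rfl] at h
    have hAW : ∀ x ∈ W, P3.mulVec x ∈ W := by
      intro x hx
      have h := hW (BSa 2 5) x hx
      rw [show (((PresentedGroup.toGroup hrel) (BSa 2 5) : GL (Fin 3) ℂ) :
          Matrix (Fin 3) (Fin 3) ℂ) = c • P3 from by
        rw [show BSa 2 5 = PresentedGroup.of true from rfl, PresentedGroup.toGroup.of]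
        exact hAval] at h
      rw [Matrix.smul_mulVec] at h
      have h2 := W.smul_mem c⁻¹ h
      rwa [smul_smul, inv_mul_cancel₀ hc, one_smul] at h2
    have hdiag : ∀ x : Fin 3 → ℂ, Dm.mulVec x = fun i => d i * x i := by
      intro x; funext i; simp [hDm, Matrix.mulVec_diagonal]
    -- eigenvalue distinctness
    have ne01 : ζ ≠ ζ ^ 4 := by
      intro h
      exact hζ3 (mul_left_cancel₀ hζ0 (show ζ * ζ ^ 3 = ζ * 1 by linear_combination -h))
    have ne02 : ζ ≠ ζ ^ 7 := by
      intro h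
      have h6 : ζ ^ 6 = 1 := mul_left_cancel₀ hζ0 (show ζ * ζ ^ 6 = ζ * 1 by linear_combination -h)
      exact hζ3 (by linear_combination hζ9 - ζ ^ 3 * h6)
    have ne12 : ζ ^ 4 ≠ ζ ^ 7 := by
      intro h
      exact hζ3 (mul_left_cancel₀ (pow_ne_zero 4 hζ0)
        (show ζ ^ 4 * ζ ^ 3 = ζ ^ 4 * 1 by linear_combination -h))
    have gen : ∀ x ∈ W, ∀ (i : Fin 3) (α β : ℂ),
        (∀ j : Fin 3, j ≠ i → (d j - α) * (d j - β) = 0) →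
        (d i - α) * (d i - β) ≠ 0 → Pi.single i (x i) ∈ W := by
      intro x hx i α β hvanish hne
      have h1 := hDW x hx
      have h2 := hDW _ h1
      have hv : (Dm.mulVec (Dm.mulVec x) - (α + β) • Dm.mulVec x + (α * β) • x) ∈ W :=
        W.add_mem (W.sub_mem h2 (W.smul_mem _ h1)) (W.smul_mem _ hx)
      have hveq : Dm.mulVec (Dm.mulVec x) - (α + β) • Dm.mulVec x + (α * β) • x
          = fun j => (d j - α) * (d j - β) * x j := by
        funext j
        simp [hdiag, Pi.sub_apply, Pi.add_apply, Pi.smul_apply, smul_eq_mul]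
        ring
      rw [hveq] at hv
      have hfun : (fun j => (d j - α) * (d j - β) * x j)
          = ((d i - α) * (d i - β)) • (Pi.single i (x i) : Fin 3 → ℂ) := by
        funext j
        by_cases hj : j = i
        · subst hj; simp [smul_eq_mul]
        · simp [Pi.single_eq_of_ne hj, hvanish j hj]
      rw [hfun] at hv
      have h3 := W.smul_mem ((d i - α) * (d i - β))⁻¹ hv
      rwa [smul_smul, inv_mul_cancel₀ hne, one_smul] at h3
    have hrot : ∀ (i : Fin 3) (t : ℂ), Pi.single i t ∈ W → Pi.single (i + 1) t ∈ W := by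
      intro i t h
      have h2 := hAW _ h
      rwa [show P3.mulVec (Pi.single i t) = Pi.single (i + 1) t by
        funext j; fin_cases i <;> fin_cases j <;>
          simp [P3, Matrix.mulVec, dotProduct, Fin.sum_univ_three, Pi.single_apply]] at h2
    -- extract a nonzero vector
    obtain ⟨x, hx, hx0⟩ := Submodule.exists_mem_ne_zero_of_ne_bot hbot
    obtain ⟨i, hi⟩ := Function.ne_iff.mp hx0
    simp only [Pi.zero_apply] at hi
    have hsi : Pi.single i (x i) ∈ W := by
      fin_cases i
      · refine gen x hx 0 (ζ ^ 4) (ζ ^ 7) ?_ ?_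
        · intro j hj
          fin_cases j
          · exact absurd rfl hj
          · simp [hd]
          · simp [hd]
        · have e : d 0 = ζ := by simp [hd]
          rw [e]
          exact mul_ne_zero (sub_ne_zero.mpr ne01) (sub_ne_zero.mpr ne02)
      · refine gen x hx 1 ζ (ζ ^ 7) ?_ ?_
        · intro j hj
          fin_cases j
          · simp [hd]
          · exact absurd rfl hj
          · simp [hd]
        · have e : d 1 = ζ ^ 4 := by simp [hd]
          rw [e]
          exact mul_ne_zero (sub_ne_zero.mpr ne01.symm) (sub_ne_zero.mpr ne12)
      · refine gen x hx 2 ζ (ζ ^ 4) ?_ ?_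
        · intro j hj
          fin_cases j
          · simp [hd]
          · simp [hd]
          · exact absurd rfl hj
        · have e : d 2 = ζ ^ 7 := by simp [hd]
          rw [e]
          exact mul_ne_zero (sub_ne_zero.mpr ne02.symm) (sub_ne_zero.mpr ne12.symm)
    have hone : Pi.single i (1:ℂ) ∈ W := by
      have h2 := W.smul_mem (x i)⁻¹ hsi
      rwa [show (x i)⁻¹ • (Pi.single i (x i) : Fin 3 → ℂ) = Pi.single i (1:ℂ) by
        funext j
        by_cases hj : j = i
        · subst hj; simp [inv_mul_cancel₀ hi]
        · simp [Pi.single_eq_of_ne hj]] at h2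
    have hall : ∀ j : Fin 3, Pi.single j (1:ℂ) ∈ W := by
      have r1 := hrot i 1 hone
      have r2 := hrot (i + 1) 1 r1
      intro j
      fin_cases i <;> fin_cases j <;>
        first
          | exact hone
          | (convert r1 using 2 <;> decide)
          | (convert r2 using 2 <;> decide)
    refine Submodule.eq_top_iff'.mpr fun y => ?_
    have hy : y = y 0 • (Pi.single 0 1 : Fin 3 → ℂ) + y 1 • (Pi.single 1 1 : Fin 3 → ℂ) +
        y 2 • (Pi.single 2 1 : Fin 3 → ℂ) := by
      funext j; fin_cases j <;> simp [Pi.single_apply]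
    rw [hy]
    exact W.add_mem (W.add_mem (W.smul_mem _ (hall 0)) (W.smul_mem _ (hall 1)))
      (W.smul_mem _ (hall 2))
end
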